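/- arXiv:1108.1645 — 3 statements merged into one kernel-verified Lean document; each statement's English description precedes it below -/
import Mathlib

section
/- Among all one-tap linear relay filters H(z) = d z^{-Δ} with integer delay Δ and gain d ≥ 0, the instantaneous amplify-and-forward scheme (Δ = 0) maximizes the achievable rate. Precisely: for every integer Δ, every d ≥ 0, and every integrable function S : [-π, π] → ℝ with S(ω) ≥ 0 for all ω, satisfying the source power constraint (1/(2π)) ∫_{-π}^{π} S(ω) dω ≤ P_s and the relay power constraint d² · (a² · (1/(2π)) ∫_{-π}^{π} S(ω) dω + σ²) ≤ P_r, one has (1/(2π)) ∫_{-π}^{π} (1/2) · log(1 + (|1 + a·b·d·e^{-iωΔ}|² / ((b²d² + 1)σ²)) · S(ω)) dω ≤ R_AF, where R_AF = sup over d ∈ [0, d_max] of (1/2) · log(1 + ((1 + a·b·d)² / ((b²d² + 1)σ²)) · P_s) and d_max = sqrt(P_r / (a²P_s + σ²)). -/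
/-!
For every frequency `|1 + a b d e^{-iωΔ}|² ≤ (1 + a b d)²`, so a delayed filter never beats the
instantaneous one with the same gain `d`; by concavity of `log` (Jensen), spreading the power `S`
over frequencies is then no better than a flat input of power `Q = ⨍ S`. If `d ≤ d_max` this is a
feasible AF point, since `Q ≤ P_s`. Otherwise the relay constraint forces
`Q ≤ (P_r - σ² d²) / (a² d²)`, and the AF signal-to-noise ratio at that power decreases in `d`,
so the gain `d_max` does at least as well.
-/

open Real MeasureTheory Set

theorem Complex.norm_one_add_ofReal_mul_exp_le {k : ℝ} (hk : 0 ≤ k) {z : ℂ} (hz : z.re = 0) :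
    ‖1 + (k : ℂ) * Complex.exp z‖ ≤ 1 + k :=
  calc ‖1 + (k : ℂ) * Complex.exp z‖
      ≤ ‖(1 : ℂ)‖ + ‖(k : ℂ) * Complex.exp z‖ := norm_add_le _ _
    _ = 1 + k := by
      rw [norm_one, norm_mul, Complex.norm_exp, hz, Real.exp_zero, mul_one, Complex.norm_real,
        Real.norm_of_nonneg hk]

theorem concaveOn_log_one_add_mul {c : ℝ} (hc : 0 ≤ c) :
    ConcaveOn ℝ (Ici 0) fun x => log (1 + c * x) := by
  have hline (x : ℝ) : AffineMap.lineMap (1 : ℝ) (1 + c) x = 1 + c * x := by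
    rw [AffineMap.lineMap_apply_ring']; ring
  have h := strictConcaveOn_log_Ioi.concaveOn.comp_affineMap (AffineMap.lineMap (1 : ℝ) (1 + c))
  refine (h.subset (fun x (hx : 0 ≤ x) => ?_) (convex_Ici 0)).congr fun x _ => ?_
  · rw [mem_preimage, hline, mem_Ioi]; positivity
  · rw [Function.comp_apply, hline]

section Average

variable {α : Type*} [MeasurableSpace α] {μ : Measure α} {f : α → ℝ}

theorem average_const_mul (c : ℝ) (f : α → ℝ) : ⨍ x, c * f x ∂μ = c * ⨍ x, f x ∂μ := by
  simp only [average_eq, integral_const_mul, smul_eq_mul]; ring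

theorem integrable_log_one_add_mul {c : ℝ} (hc : 0 ≤ c) (hf : Integrable f μ)
    (hf0 : ∀ x, 0 ≤ f x) : Integrable (fun x => log (1 + c * f x)) μ := by
  refine (hf.const_mul c).mono' ?_ (Filter.Eventually.of_forall fun x => ?_)
  · exact (measurable_log.comp_aemeasurable
      ((hf.aemeasurable.const_mul c).const_add 1)).aestronglyMeasurable
  · have hcf : 0 ≤ c * f x := mul_nonneg hc (hf0 x)
    rw [Real.norm_of_nonneg (log_nonneg (by linarith))]
    linarith [log_le_sub_one_of_pos (by linarith : 0 < 1 + c * f x)]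

theorem average_log_one_add_mul_le [IsFiniteMeasure μ] [NeZero μ] {g : α → ℝ} {c : ℝ}
    (hf : Integrable f μ) (hf0 : ∀ x, 0 ≤ f x) (hg0 : ∀ x, 0 ≤ g x) (hgc : ∀ x, g x ≤ c) :
    ⨍ x, log (1 + g x * f x) ∂μ ≤ log (1 + c * ⨍ x, f x ∂μ) := by
  obtain ⟨x₀⟩ := μ.nonempty_of_neZero
  have hc : 0 ≤ c := (hg0 x₀).trans (hgc x₀)
  have hcf := integrable_log_one_add_mul hc hf hf0
  have hmono : ⨍ x, log (1 + g x * f x) ∂μ ≤ ⨍ x, log (1 + c * f x) ∂μ := by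
    simp only [average_eq, smul_eq_mul]
    refine mul_le_mul_of_nonneg_left (integral_mono_of_nonneg (ae_of_all _ fun x => ?_) hcf
      (ae_of_all _ fun x => ?_)) (by positivity)
    · exact log_nonneg (by nlinarith [mul_nonneg (hg0 x) (hf0 x)])
    · have hgf : 0 ≤ g x * f x := mul_nonneg (hg0 x) (hf0 x)
      have hgf' : g x * f x ≤ c * f x := mul_le_mul_of_nonneg_right (hgc x) (hf0 x)
      exact log_le_log (by linarith) (by linarith)
  have hcont : ContinuousOn (fun x => log (1 + c * x)) (Ici 0) :=
    ContinuousOn.log (by fun_prop) fun x (hx : 0 ≤ x) => by positivity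
  exact hmono.trans <|
    (concaveOn_log_one_add_mul hc).le_map_average hcont isClosed_Ici (ae_of_all _ hf0) hf hcf

end Average

theorem setAverage_Icc_neg_pi_pi (f : ℝ → ℝ) :
    ⨍ x in Icc (-π) π, f x = 1 / (2 * π) * ∫ x in Icc (-π) π, f x := by
  rw [setAverage_eq, volume_real_Icc, smul_eq_mul, max_eq_left (by linarith [pi_pos])]
  ring_nf

instance neZero_volume_restrict_Icc_neg_pi_pi : NeZero (volume.restrict (Icc (-π) π)) :=
  ⟨by simp [Measure.restrict_eq_zero, pi_pos]⟩

/-- Signal-to-noise ratio per unit source power of instantaneous amplify-and-forward with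
relay gain `x`. -/
noncomputable def afGain (a b σ2 x : ℝ) : ℝ := (1 + a * b * x) ^ 2 / ((b ^ 2 * x ^ 2 + 1) * σ2)

section AFGain

variable {a b σ2 : ℝ}

theorem afGain_nonneg (hσ2 : 0 < σ2) (x : ℝ) : 0 ≤ afGain a b σ2 x := by
  unfold afGain; positivity

theorem afGain_le (hσ2 : 0 < σ2) (x : ℝ) : afGain a b σ2 x ≤ (1 + a ^ 2) / σ2 := by
  rw [afGain, div_le_div_iff₀ (by positivity) hσ2]
  nlinarith [sq_nonneg (a - b * x)]

theorem afGain_mul_le_of_relay_constraint (ha : 0 < a) (hb : 0 ≤ b) (hσ2 : 0 < σ2)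
    {t d Q P : ℝ} (ht : 0 < t) (htd : t ≤ d) (hQ : 0 ≤ Q)
    (hrel : d ^ 2 * (a ^ 2 * Q + σ2) ≤ t ^ 2 * (a ^ 2 * P + σ2)) :
    afGain a b σ2 d * Q ≤ afGain a b σ2 t * P := by
  have hd : 0 < d := ht.trans_le htd
  set Pr := t ^ 2 * (a ^ 2 * P + σ2)
  -- the relay budget bounds `a² x² R` by `Pr - σ2 x²`, and the other factor decreases in `x`
  have hscale (x R : ℝ) (hx : 0 < x) : afGain a b σ2 x * R =
      (1 / x + a * b) ^ 2 / ((b ^ 2 * x ^ 2 + 1) * σ2 * a ^ 2) * (a ^ 2 * x ^ 2 * R) := by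
    unfold afGain; field_simp
  have hbudget : 0 ≤ Pr - σ2 * d ^ 2 := by nlinarith [mul_nonneg (sq_nonneg (a * d)) hQ]
  calc afGain a b σ2 d * Q
      = (1 / d + a * b) ^ 2 / ((b ^ 2 * d ^ 2 + 1) * σ2 * a ^ 2) * (a ^ 2 * d ^ 2 * Q) :=
        hscale d Q hd
    _ ≤ (1 / d + a * b) ^ 2 / ((b ^ 2 * d ^ 2 + 1) * σ2 * a ^ 2) * (Pr - σ2 * d ^ 2) := by
        gcongr; linarith
    _ ≤ (1 / t + a * b) ^ 2 / ((b ^ 2 * t ^ 2 + 1) * σ2 * a ^ 2) * (Pr - σ2 * t ^ 2) := by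
        gcongr
    _ = afGain a b σ2 t * P := by rw [hscale t P ht]; ring

theorem exists_afGain_mul_le (ha : 0 < a) (hb : 0 ≤ b) (hσ2 : 0 < σ2) {d Q Ps Pr : ℝ}
    (hd : 0 ≤ d) (hQ : 0 ≤ Q) (hsrc : Q ≤ Ps) (hrel : d ^ 2 * (a ^ 2 * Q + σ2) ≤ Pr) :
    ∃ d' ∈ Icc 0 √(Pr / (a ^ 2 * Ps + σ2)),
      afGain a b σ2 d * Q ≤ afGain a b σ2 d' * Ps := by
  set t := √(Pr / (a ^ 2 * Ps + σ2))
  rcases le_or_gt d t with hdt | htd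
  · exact ⟨d, ⟨hd, hdt⟩, mul_le_mul_of_nonneg_left hsrc (afGain_nonneg hσ2 d)⟩
  have hd' : 0 < d := (sqrt_nonneg _).trans_lt htd
  have hPr : 0 < Pr := by
    nlinarith [mul_pos (pow_pos hd' 2) hσ2, mul_nonneg (sq_nonneg d) (mul_nonneg (sq_nonneg a) hQ)]
  have hden : 0 < a ^ 2 * Ps + σ2 := by nlinarith
  have ht2 : t ^ 2 * (a ^ 2 * Ps + σ2) = Pr := by
    rw [sq_sqrt (by positivity), div_mul_cancel₀ _ hden.ne']
  exact ⟨t, ⟨sqrt_nonneg _, le_rfl⟩, afGain_mul_le_of_relay_constraint ha hb hσ2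
    (sqrt_pos.2 (by positivity)) htd.le hQ (by rwa [ht2])⟩

theorem le_iSup_afRate (hσ2 : 0 < σ2) {P x : ℝ} (hP : 0 ≤ P) {s : Set ℝ} (hx : x ∈ s) :
    1 / 2 * log (1 + afGain a b σ2 x * P) ≤
      ⨆ y ∈ s, 1 / 2 * log (1 + afGain a b σ2 y * P) := by
  have hbdd : BddAbove (range fun y => 1 / 2 * log (1 + afGain a b σ2 y * P)) := by
    refine ⟨1 / 2 * log (1 + (1 + a ^ 2) / σ2 * P), forall_mem_range.2 fun y => ?_⟩
    have := mul_nonneg (afGain_nonneg (a := a) (b := b) hσ2 y) hP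
    gcongr
    exact afGain_le hσ2 y
  exact le_ciSup₂ (f := fun y (_ : y ∈ s) => 1 / 2 * log (1 + afGain a b σ2 y * P))
    (hbdd.mono (iUnion_subset fun y => range_subset_iff.2 fun _ => mem_range_self y)) x hx

end AFGain

theorem af_optimal_among_one_tap_relay_filters_general
    (a b σ2 Ps Pr : ℝ) (ha : 0 < a) (hb : 0 < b) (hσ2 : 0 < σ2)
    (Δ : ℤ) (d : ℝ) (hd : 0 ≤ d)
    (S : ℝ → ℝ) (hS : IntegrableOn S (Icc (-π) π))
    (hSnn : ∀ ω, 0 ≤ S ω)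
    (hsrc : (1 / (2 * π)) * (∫ ω in Icc (-π) π, S ω) ≤ Ps)
    (hrel : d ^ 2 * (a ^ 2 * ((1 / (2 * π)) * ∫ ω in Icc (-π) π, S ω) + σ2) ≤ Pr) :
    (1 / (2 * π)) * (∫ ω in Icc (-π) π,
        (1 / 2) * Real.log (1 +
          (‖1 + ((a * b * d : ℝ) : ℂ) * Complex.exp (-Complex.I * (ω : ℂ) * (Δ : ℂ))‖ ^ 2
            / ((b ^ 2 * d ^ 2 + 1) * σ2)) * S ω))
      ≤ ⨆ d' ∈ Icc (0 : ℝ) (Real.sqrt (Pr / (a ^ 2 * Ps + σ2))),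
          (1 / 2) * Real.log (1 + ((1 + a * b * d') ^ 2 / ((b ^ 2 * d' ^ 2 + 1) * σ2)) * Ps) := by
  rw [← setAverage_Icc_neg_pi_pi] at hsrc hrel ⊢
  have hQ : 0 ≤ ⨍ ω in Icc (-π) π, S ω := by
    rw [setAverage_eq]; exact smul_nonneg (by positivity) (integral_nonneg hSnn)
  obtain ⟨d', hd', hgain⟩ := exists_afGain_mul_le ha hb.le hσ2 hd hQ hsrc hrel
  have hchannel (ω : ℝ) :
      ‖1 + ((a * b * d : ℝ) : ℂ) * Complex.exp (-Complex.I * (ω : ℂ) * (Δ : ℂ))‖ ^ 2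
        / ((b ^ 2 * d ^ 2 + 1) * σ2) ≤ afGain a b σ2 d := by
    unfold afGain
    gcongr
    exact Complex.norm_one_add_ofReal_mul_exp_le (by positivity) (by simp)
  rw [average_const_mul]
  calc _ ≤ 1 / 2 * Real.log (1 + afGain a b σ2 d * ⨍ ω in Icc (-π) π, S ω) := by
        gcongr
        exact average_log_one_add_mul_le hS hSnn (fun ω => by positivity) hchannel
    _ ≤ 1 / 2 * Real.log (1 + afGain a b σ2 d' * Ps) := by
        have := mul_nonneg (afGain_nonneg (a := a) (b := b) hσ2 d) hQ
        gcongr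
    _ ≤ _ := le_iSup_afRate hσ2 (hQ.trans hsrc) hd'

/-- Among all one-tap linear relay filters `H(z) = d z^{-Δ}` with integer delay `Δ` and
gain `d ≥ 0`, the instantaneous amplify-and-forward scheme (`Δ = 0`) maximizes the
achievable rate in the flat-fading Gaussian relay channel. -/
theorem af_optimal_among_one_tap_relay_filters
    (a b σ2 Ps Pr : ℝ) (ha : 0 < a) (hb : 0 < b) (hσ2 : 0 < σ2)
    (hPs : 0 < Ps) (hPr : 0 < Pr)
    (Δ : ℤ) (d : ℝ) (hd : 0 ≤ d)
    (S : ℝ → ℝ) (hS : IntegrableOn S (Icc (-π) π))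
    (hSnn : ∀ ω, 0 ≤ S ω)
    (hsrc : (1 / (2 * π)) * (∫ ω in Icc (-π) π, S ω) ≤ Ps)
    (hrel : d ^ 2 * (a ^ 2 * ((1 / (2 * π)) * ∫ ω in Icc (-π) π, S ω) + σ2) ≤ Pr) :
    (1 / (2 * π)) * (∫ ω in Icc (-π) π,
        (1 / 2) * Real.log (1 +
          (‖1 + ((a * b * d : ℝ) : ℂ) * Complex.exp (-Complex.I * (ω : ℂ) * (Δ : ℂ))‖ ^ 2
            / ((b ^ 2 * d ^ 2 + 1) * σ2)) * S ω))
      ≤ ⨆ d' ∈ Icc (0 : ℝ) (Real.sqrt (Pr / (a ^ 2 * Ps + σ2))),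
          (1 / 2) * Real.log (1 + ((1 + a * b * d') ^ 2 / ((b ^ 2 * d' ^ 2 + 1) * σ2)) * Ps) :=
  af_optimal_among_one_tap_relay_filters_general a b σ2 Ps Pr ha hb hσ2 Δ d hd S hS hSnn hsrc hrel
end

section
/- (Intersection over the power ball equals intersection over its surface) Fix a continuous function H_sr : [-π, π] → ℂ, σ² > 0, positive integers L_s and L_r, P_s > 0 and P_r > 0. With T(ω; t), H(ω; h), Q(t, h) and ξ(t) = {h ∈ ℝ^{L_r} : Q(t, h) ≤ P_r} defined as for the relay power constraint, one has ⋂_{t ∈ ℝ^{L_s}, ‖t‖² ≤ P_s} ξ(t) = ⋂_{t ∈ ℝ^{L_s}, ‖t‖² = P_s} ξ(t). -/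
open Real MeasureTheory Set intervalIntegral

/-!
The relay power `Q(t, h)` depends on `t` only through `|T(ω; t)|`, and it is monotone in it.
Since `T(ω; c • t) = c · T(ω; t)`, shrinking `t` by a factor `c ∈ [0, 1]` can only lower
`Q(t, h)`, so `ξ(t) ⊆ ξ(c • t)`. Every point of the power ball is such a multiple of a point of
its surface, which therefore already carries the whole intersection.
-/

noncomputable def firResponse {L : ℕ} (a : Fin L → ℝ) (ω : ℝ) : ℂ :=
  ∑ l : Fin L, (a l : ℂ) * Complex.exp (-Complex.I * ((l : ℕ) : ℂ) * (ω : ℂ))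

theorem continuous_firResponse {L : ℕ} (a : Fin L → ℝ) : Continuous (firResponse a) :=
  continuous_finsetSum _ fun _ _ => by fun_prop

theorem firResponse_smul {L : ℕ} (c : ℝ) (a : Fin L → ℝ) (ω : ℝ) :
    firResponse (c • a) ω = c * firResponse a ω := by
  simp only [firResponse, Finset.mul_sum, Pi.smul_apply, smul_eq_mul, Complex.ofReal_mul,
    mul_assoc]

noncomputable def relayPower (Hsr : ℝ → ℂ) (σ2 : ℝ) {Ls Lr : ℕ} (t : Fin Ls → ℝ)
    (h : Fin Lr → ℝ) : ℝ :=
  (1 / (2 * π)) * ∫ ω in (-π)..π,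
    ‖firResponse h ω‖ ^ 2 * (‖Hsr ω‖ ^ 2 * ‖firResponse t ω‖ ^ 2 + σ2)

theorem relayPower_mono {Hsr : ℝ → ℂ} (hHsr : ContinuousOn Hsr (Icc (-π) π)) (σ2 : ℝ)
    {Ls Lr : ℕ} {t₁ t₂ : Fin Ls → ℝ} (h : Fin Lr → ℝ)
    (ht : ∀ ω ∈ Icc (-π) π, ‖firResponse t₁ ω‖ ≤ ‖firResponse t₂ ω‖) :
    relayPower Hsr σ2 t₁ h ≤ relayPower Hsr σ2 t₂ h := by
  have hpi : -π ≤ π := by linarith [pi_pos]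
  have integrable : ∀ t : Fin Ls → ℝ, IntervalIntegrable
      (fun ω ↦ ‖firResponse h ω‖ ^ 2 * (‖Hsr ω‖ ^ 2 * ‖firResponse t ω‖ ^ 2 + σ2)) volume (-π) π :=
    fun t ↦ ContinuousOn.intervalIntegrable <| by
      rw [uIcc_of_le hpi]
      have := continuous_firResponse h
      have := continuous_firResponse t
      fun_prop
  refine mul_le_mul_of_nonneg_left (integral_mono_on hpi (integrable t₁) (integrable t₂)
    fun ω hω ↦ ?_) (by positivity)
  gcongr
  exact ht ω hω

theorem relayPower_smul_le {Hsr : ℝ → ℂ} (hHsr : ContinuousOn Hsr (Icc (-π) π)) (σ2 : ℝ)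
    {Ls Lr : ℕ} (t : Fin Ls → ℝ) (h : Fin Lr → ℝ) {c : ℝ} (hc : |c| ≤ 1) :
    relayPower Hsr σ2 (c • t) h ≤ relayPower Hsr σ2 t h :=
  relayPower_mono hHsr σ2 h fun ω _ ↦ by
    rw [firResponse_smul, norm_mul, Complex.norm_real, Real.norm_eq_abs]
    exact mul_le_of_le_one_left (norm_nonneg _) hc

theorem exists_smul_eq_of_mem_closedBall {E : Type*} [NormedAddCommGroup E] [NormedSpace ℝ E]
    [Nontrivial E] {r : ℝ} {t : E} (ht : t ∈ Metric.closedBall (0 : E) r) :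
    ∃ u ∈ Metric.sphere (0 : E) r, ∃ c ∈ Icc (0 : ℝ) 1, c • u = t := by
  rw [mem_closedBall_zero_iff] at ht
  rcases eq_or_ne t 0 with rfl | ht0
  · obtain ⟨u, hu⟩ := (NormedSpace.sphere_nonempty (x := (0 : E))).mpr ((norm_nonneg _).trans ht)
    exact ⟨u, hu, 0, ⟨le_rfl, zero_le_one⟩, zero_smul ℝ u⟩
  · have htpos : 0 < ‖t‖ := norm_pos_iff.mpr ht0
    have hr : 0 < r := htpos.trans_le ht
    refine ⟨(r / ‖t‖) • t, ?_, ‖t‖ / r, ⟨by positivity, (div_le_one hr).mpr ht⟩, ?_⟩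
    · rw [mem_sphere_zero_iff_norm, norm_smul, Real.norm_of_nonneg (by positivity),
        div_mul_cancel₀ r htpos.ne']
    · rw [smul_smul, div_mul_div_cancel₀ hr.ne', div_self htpos.ne', one_smul]

theorem biInter_closedBall_eq_biInter_sphere {α E : Type*} [NormedAddCommGroup E]
    [NormedSpace ℝ E] [Nontrivial E] {S : E → Set α}
    (hS : ∀ t, ∀ c ∈ Icc (0 : ℝ) 1, S t ⊆ S (c • t)) (r : ℝ) :
    ⋂ t ∈ Metric.closedBall (0 : E) r, S t = ⋂ t ∈ Metric.sphere (0 : E) r, S t := by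
  refine (biInter_subset_biInter_left Metric.sphere_subset_closedBall).antisymm ?_
  intro x hx
  simp only [mem_iInter] at hx ⊢
  intro t ht
  obtain ⟨u, hu, c, hc, rfl⟩ := exists_smul_eq_of_mem_closedBall ht
  exact hS u c hc (hx u hu)

theorem inter_ellipsoids_ball_eq_sphere_general
    (Hsr : ℝ → ℂ) (hHsr : ContinuousOn Hsr (Icc (-π) π))
    (σ2 : ℝ) (Ls Lr : ℕ) (hLs : 0 < Ls)
    (Ps Pr : ℝ) (hPs : 0 < Ps)
    (Q : EuclideanSpace ℝ (Fin Ls) → (Fin Lr → ℝ) → ℝ)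
    (hQ : ∀ (t : EuclideanSpace ℝ (Fin Ls)) (h : Fin Lr → ℝ), Q t h =
      (1 / (2 * π)) * ∫ ω in (-π)..π,
        ‖(∑ l : Fin Lr, ((h l : ℝ) : ℂ)
            * Complex.exp (-Complex.I * ((l : ℕ) : ℂ) * (ω : ℂ)))‖ ^ 2 *
          (‖Hsr ω‖ ^ 2 *
            ‖(∑ l : Fin Ls, ((t l : ℝ) : ℂ)
              * Complex.exp (-Complex.I * ((l : ℕ) : ℂ) * (ω : ℂ)))‖ ^ 2 + σ2)) :
    (⋂ t ∈ {t : EuclideanSpace ℝ (Fin Ls) | ‖t‖ ^ 2 ≤ Ps},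
        {h : Fin Lr → ℝ | Q t h ≤ Pr})
      = ⋂ t ∈ {t : EuclideanSpace ℝ (Fin Ls) | ‖t‖ ^ 2 = Ps},
          {h : Fin Lr → ℝ | Q t h ≤ Pr} := by
  have : Nonempty (Fin Ls) := Fin.pos_iff_nonempty.mp hLs
  have hball : {t : EuclideanSpace ℝ (Fin Ls) | ‖t‖ ^ 2 ≤ Ps} = Metric.closedBall 0 √Ps := by
    ext t
    exact (mem_closedBall_zero_iff.trans (Real.le_sqrt (norm_nonneg t) hPs.le)).symm
  have hsphere : {t : EuclideanSpace ℝ (Fin Ls) | ‖t‖ ^ 2 = Ps} = Metric.sphere 0 √Ps := by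
    ext t
    exact (mem_sphere_zero_iff_norm.trans
      (eq_comm.trans ((Real.sqrt_eq_iff_eq_sq hPs.le (norm_nonneg t)).trans eq_comm))).symm
  obtain rfl : Q = fun t h ↦ relayPower Hsr σ2 t.ofLp h := funext₂ hQ
  rw [hball, hsphere]
  refine biInter_closedBall_eq_biInter_sphere (fun t c hc h hh ↦ ?_) _
  exact (relayPower_smul_le hHsr σ2 t h ((abs_of_nonneg hc.1).trans_le hc.2)).trans hh

/-- The intersection of the relay power ellipsoids `ξ(t)` over the closed source power
ball `‖t‖² ≤ P_s` equals the intersection over its surface `‖t‖² = P_s`. -/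
theorem inter_ellipsoids_ball_eq_sphere
    (Hsr : ℝ → ℂ) (hHsr : ContinuousOn Hsr (Icc (-π) π))
    (σ2 : ℝ) (hσ2 : 0 < σ2) (Ls Lr : ℕ) (hLs : 0 < Ls) (hLr : 0 < Lr)
    (Ps Pr : ℝ) (hPs : 0 < Ps) (hPr : 0 < Pr)
    (Q : EuclideanSpace ℝ (Fin Ls) → (Fin Lr → ℝ) → ℝ)
    (hQ : ∀ (t : EuclideanSpace ℝ (Fin Ls)) (h : Fin Lr → ℝ), Q t h =
      (1 / (2 * π)) * ∫ ω in (-π)..π,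
        ‖(∑ l : Fin Lr, ((h l : ℝ) : ℂ)
            * Complex.exp (-Complex.I * ((l : ℕ) : ℂ) * (ω : ℂ)))‖ ^ 2 *
          (‖Hsr ω‖ ^ 2 *
            ‖(∑ l : Fin Ls, ((t l : ℝ) : ℂ)
              * Complex.exp (-Complex.I * ((l : ℕ) : ℂ) * (ω : ℂ)))‖ ^ 2 + σ2)) :
    (⋂ t ∈ {t : EuclideanSpace ℝ (Fin Ls) | ‖t‖ ^ 2 ≤ Ps},
        {h : Fin Lr → ℝ | Q t h ≤ Pr})
      = ⋂ t ∈ {t : EuclideanSpace ℝ (Fin Ls) | ‖t‖ ^ 2 = Ps},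
          {h : Fin Lr → ℝ | Q t h ≤ Pr} :=
  inter_ellipsoids_ball_eq_sphere_general Hsr hHsr σ2 Ls Lr hLs Ps Pr hPs Q hQ
end

section
/- (The low-pass relay's passband noise level is no worse than the AF noise level) Let a > 0, b > 0, σ² > 0, P_s > 0, P_r > 0, 0 ≤ P_pass ≤ P_s and 0 < ω_c ≤ π. Set d* = min{a/b, sqrt(P_r/(a²P_s + σ²))} and δ* = min{a/b, sqrt(P_r/(a²P_pass + (ω_c/π)·σ²))}. Then d* ≤ δ* ≤ a/b, and consequently the passband effective noise level satisfies (b²δ*² + 1)·σ²/(1 + a·b·δ*)² ≤ (b²d*² + 1)·σ²/(1 + a·b·d*)². -/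
open Real

noncomputable def noiseLevel (a b σ2 d : ℝ) : ℝ :=
  (b ^ 2 * d ^ 2 + 1) * σ2 / (1 + a * b * d) ^ 2

/-- `N` is the power the relay receives, so the gain `√(Pr / N)` exhausts the relay power `Pr`. -/
noncomputable def optimalGain (a b Pr N : ℝ) : ℝ :=
  min (a / b) (√(Pr / N))

lemma optimalGain_nonneg {a b : ℝ} (ha : 0 ≤ a) (hb : 0 ≤ b) (Pr N : ℝ) :
    0 ≤ optimalGain a b Pr N :=
  le_min (div_nonneg ha hb) (sqrt_nonneg _)

lemma optimalGain_le (a b Pr N : ℝ) : optimalGain a b Pr N ≤ a / b :=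
  min_le_left _ _

lemma optimalGain_le_optimalGain {a b Pr N₁ N₂ : ℝ} (hPr : 0 ≤ Pr) (hN₂ : 0 < N₂)
    (hN : N₂ ≤ N₁) : optimalGain a b Pr N₁ ≤ optimalGain a b Pr N₂ :=
  min_le_min le_rfl (sqrt_le_sqrt (div_le_div_of_nonneg_left hPr hN₂ hN))

lemma noiseLevel_cross_sub (a b x y : ℝ) :
    (b ^ 2 * x ^ 2 + 1) * (1 + a * b * y) ^ 2 - (b ^ 2 * y ^ 2 + 1) * (1 + a * b * x) ^ 2
      = b * (y - x) * ((a - b * x) * (1 + a * b * y) + (a - b * y) * (1 + a * b * x)) := by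
  ring

/-- `η` decreases up to the matched gain `a / b`, where `η'(d) ∝ b d - a` changes sign. -/
lemma noiseLevel_antitoneOn {a b σ2 : ℝ} (ha : 0 ≤ a) (hb : 0 < b) (hσ2 : 0 ≤ σ2) :
    AntitoneOn (noiseLevel a b σ2) (Set.Icc 0 (a / b)) := by
  rintro x ⟨hx, -⟩ y ⟨hy, hya⟩ hxy
  rw [le_div_iff₀' hb] at hya
  have hxa : b * x ≤ a := (mul_le_mul_of_nonneg_left hxy hb.le).trans hya
  have hcross : (b ^ 2 * y ^ 2 + 1) * (1 + a * b * x) ^ 2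
      ≤ (b ^ 2 * x ^ 2 + 1) * (1 + a * b * y) ^ 2 := by
    rw [← sub_nonneg, noiseLevel_cross_sub]
    have := sub_nonneg.2 hxa
    have := sub_nonneg.2 hya
    have := sub_nonneg.2 hxy
    positivity
  unfold noiseLevel
  rw [div_le_div_iff₀ (by positivity) (by positivity)]
  calc (b ^ 2 * y ^ 2 + 1) * σ2 * (1 + a * b * x) ^ 2
      = σ2 * ((b ^ 2 * y ^ 2 + 1) * (1 + a * b * x) ^ 2) := by ring
    _ ≤ σ2 * ((b ^ 2 * x ^ 2 + 1) * (1 + a * b * y) ^ 2) := by gcongr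
    _ = (b ^ 2 * x ^ 2 + 1) * σ2 * (1 + a * b * y) ^ 2 := by ring

theorem lowpass_passband_noise_le_af_general
    (a b σ2 Ps Pr Ppass ωc : ℝ) (ha : 0 < a) (hb : 0 < b) (hσ2 : 0 < σ2)
    (hPr : 0 < Pr) (hPpass0 : 0 ≤ Ppass) (hPpass : Ppass ≤ Ps)
    (hωc0 : 0 < ωc) (hωcπ : ωc ≤ π) :
    min (a / b) (Real.sqrt (Pr / (a ^ 2 * Ps + σ2)))
        ≤ min (a / b) (Real.sqrt (Pr / (a ^ 2 * Ppass + (ωc / π) * σ2)))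
    ∧ min (a / b) (Real.sqrt (Pr / (a ^ 2 * Ppass + (ωc / π) * σ2))) ≤ a / b
    ∧ (b ^ 2 * (min (a / b) (Real.sqrt (Pr / (a ^ 2 * Ppass + (ωc / π) * σ2)))) ^ 2 + 1) * σ2
          / (1 + a * b * min (a / b) (Real.sqrt (Pr / (a ^ 2 * Ppass + (ωc / π) * σ2)))) ^ 2
      ≤ (b ^ 2 * (min (a / b) (Real.sqrt (Pr / (a ^ 2 * Ps + σ2)))) ^ 2 + 1) * σ2
          / (1 + a * b * min (a / b) (Real.sqrt (Pr / (a ^ 2 * Ps + σ2)))) ^ 2 := by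
  have hfrac : ωc / π ≤ 1 := (div_le_one pi_pos).2 hωcπ
  have hpass_pos : 0 < a ^ 2 * Ppass + (ωc / π) * σ2 := by positivity
  have hpass_le : a ^ 2 * Ppass + (ωc / π) * σ2 ≤ a ^ 2 * Ps + σ2 := by
    gcongr
    exact mul_le_of_le_one_left hσ2.le hfrac
  have hgain : optimalGain a b Pr (a ^ 2 * Ps + σ2)
      ≤ optimalGain a b Pr (a ^ 2 * Ppass + (ωc / π) * σ2) :=
    optimalGain_le_optimalGain hPr.le hpass_pos hpass_le
  refine ⟨hgain, optimalGain_le _ _ _ _, ?_⟩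
  exact noiseLevel_antitoneOn ha.le hb hσ2.le
    ⟨optimalGain_nonneg ha.le hb.le _ _, optimalGain_le _ _ _ _⟩
    ⟨optimalGain_nonneg ha.le hb.le _ _, optimalGain_le _ _ _ _⟩ hgain

/-- The ideal low-pass relay's passband effective noise level is no worse than the AF
noise level: with `d* = min{a/b, √(P_r/(a²P_s + σ²))}` and
`δ* = min{a/b, √(P_r/(a²P_pass + (ω_c/π)σ²))}` one has `d* ≤ δ* ≤ a/b` and
`η(δ*) ≤ η(d*)` for `η(d) = (b²d² + 1)σ²/(1 + abd)²`. -/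
theorem lowpass_passband_noise_le_af
    (a b σ2 Ps Pr Ppass ωc : ℝ) (ha : 0 < a) (hb : 0 < b) (hσ2 : 0 < σ2)
    (hPs : 0 < Ps) (hPr : 0 < Pr) (hPpass0 : 0 ≤ Ppass) (hPpass : Ppass ≤ Ps)
    (hωc0 : 0 < ωc) (hωcπ : ωc ≤ π) :
    min (a / b) (Real.sqrt (Pr / (a ^ 2 * Ps + σ2)))
        ≤ min (a / b) (Real.sqrt (Pr / (a ^ 2 * Ppass + (ωc / π) * σ2)))
    ∧ min (a / b) (Real.sqrt (Pr / (a ^ 2 * Ppass + (ωc / π) * σ2))) ≤ a / b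
    ∧ (b ^ 2 * (min (a / b) (Real.sqrt (Pr / (a ^ 2 * Ppass + (ωc / π) * σ2)))) ^ 2 + 1) * σ2
          / (1 + a * b * min (a / b) (Real.sqrt (Pr / (a ^ 2 * Ppass + (ωc / π) * σ2)))) ^ 2
      ≤ (b ^ 2 * (min (a / b) (Real.sqrt (Pr / (a ^ 2 * Ps + σ2)))) ^ 2 + 1) * σ2
          / (1 + a * b * min (a / b) (Real.sqrt (Pr / (a ^ 2 * Ps + σ2)))) ^ 2 :=
  lowpass_passband_noise_le_af_general a b σ2 Ps Pr Ppass ωc ha hb hσ2 hPr hPpass0 hPpass hωc0 hωcπ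
end
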